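/- arXiv:2401.17184 — 2 statements merged into one kernel-verified Lean document; each statement's English description precedes it below -/
import Mathlib

section
/- Let m ≥ 0 and let x, x* be real numbers with x ≤ −1, x* ≤ −1 and |x − x*| ≤ m. Then |Φ⁻(x) − Φ⁻(x*)| ≤ Φ⁻(−1 − m) − Φ⁻(−1). -/
/-- Φ⁻(x) = log₂(1 − 2^x) -/
noncomputable def Phim (x : ℝ) : ℝ := Real.logb 2 (1 - (2:ℝ) ^ x)

lemma phim_pos_arg {x : ℝ} (hx : x < 0) : 0 < 1 - (2:ℝ) ^ x := by
  have : (2:ℝ) ^ x < 1 := Real.rpow_lt_one_of_one_lt_of_neg (by norm_num) hx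
  linarith

lemma phim_anti {a b : ℝ} (hb : b < 0) (hab : a ≤ b) : Phim b ≤ Phim a := by
  unfold Phim
  have := (Real.rpow_le_rpow_left_iff (x := (2:ℝ)) (y := a) (z := b) (by norm_num)).2 hab
  exact Real.logb_le_logb_of_le (by norm_num) (phim_pos_arg hb) (by linarith)

lemma phim_key (m : ℝ) (d : ℝ) (hd : 0 ≤ d) (hdm : d ≤ m) (s : ℝ) (hs : s ≤ -1) :
    Phim (s - d) - Phim s ≤ Phim (-1 - m) - Phim (-1) := by
  have h1 : Phim (s - d) - Phim s ≤ Phim (-1 - d) - Phim (-1) := by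
    unfold Phim
    have hApos : 0 < 1 - (2:ℝ) ^ (s - d) := phim_pos_arg (by linarith)
    have hBpos : 0 < 1 - (2:ℝ) ^ s := phim_pos_arg (by linarith)
    have hCpos : 0 < 1 - (2:ℝ) ^ (-1 - d : ℝ) := phim_pos_arg (by linarith)
    have hDpos : 0 < 1 - (2:ℝ) ^ (-1 : ℝ) := phim_pos_arg (by norm_num)
    rw [sub_le_sub_iff, ← Real.logb_mul (by positivity) (by positivity),
      ← Real.logb_mul (by positivity) (by positivity)]
    apply Real.logb_le_logb_of_le (by norm_num) (by positivity)
    have e1 : (2:ℝ) ^ (s - d) = (2:ℝ) ^ s * (2:ℝ) ^ (-d) := by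
      rw [← Real.rpow_add (by norm_num)]; ring_nf
    have e2 : (2:ℝ) ^ (-1 - d : ℝ) = (2:ℝ) ^ (-1 : ℝ) * (2:ℝ) ^ (-d) := by
      rw [← Real.rpow_add (by norm_num)]; ring_nf
    have h2s : (2:ℝ) ^ s ≤ (2:ℝ) ^ (-1 : ℝ) :=
      (Real.rpow_le_rpow_left_iff (x := (2:ℝ)) (by norm_num)).2 hs
    have hu : (2:ℝ) ^ (-d) ≤ 1 := Real.rpow_le_one_of_one_le_of_nonpos (by norm_num) (by linarith)
    rw [e1, e2]
    nlinarith [Real.rpow_pos_of_pos (show (0:ℝ) < 2 by norm_num) s,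
      Real.rpow_pos_of_pos (show (0:ℝ) < 2 by norm_num) (-d)]
  have h2 : Phim (-1 - d) ≤ Phim (-1 - m) := phim_anti (by linarith) (by linarith)
  linarith

theorem stmt_16 (m : ℝ) (hm : 0 ≤ m) (x xstar : ℝ)
    (hx : x ≤ -1) (hxstar : xstar ≤ -1) (hclose : |x - xstar| ≤ m) :
    |Phim x - Phim xstar| ≤ Phim (-1 - m) - Phim (-1) := by
  rcases le_total x xstar with h | h
  · have hnn : Phim xstar ≤ Phim x := phim_anti (by linarith) h
    rw [abs_of_nonneg (by linarith)]
    have hd : xstar - x ≤ m := by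
      rw [abs_sub_comm] at hclose; exact (abs_le.1 hclose).2
    have := phim_key m (xstar - x) (by linarith) hd xstar hxstar
    simpa using this
  · have hnn : Phim x ≤ Phim xstar := phim_anti (by linarith) h
    rw [abs_of_nonpos (by linarith)]
    have hd : x - xstar ≤ m := (abs_le.1 hclose).2
    have := phim_key m (x - xstar) (by linarith) hd x hx
    simpa using this
end

section
/- Let x, r_c, r_b be real numbers with r_c < x < 0 and r_b < r_c − x. Set r_ab = r_c − x, r_a = r_b − r_ab, k₁ = r_ab + Φ⁻(r_a) − Φ⁻(r_b), and k₂ = x + Φ⁻(r_b) + Φ⁻(k₁) − Φ⁻(r_c). Then k₁ < 0, k₂ < 0, and the co-transformation identity Φ⁻(x) = Φ⁻(r_c) + Φ⁻(k₂) holds. -/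
/-!
Writing `u = 2^a`, `v = 2^b` with `0 < v < u < 1`, the quantity `k = a + Φ⁻(b - a) - Φ⁻(b)`
satisfies `2^k = (u - v) / (1 - v)`, hence `1 - 2^k = (1 - u) / (1 - v)`: so `k < 0` and
`Φ⁻(k) = Φ⁻(a) - Φ⁻(b)`. Applied to `(a, b) = (r_c - x, r_b)` this gives `k₁ < 0` and
`Φ⁻(k₁) = Φ⁻(r_c - x) - Φ⁻(r_b)`, so `k₂ = x + Φ⁻(r_c - x) - Φ⁻(r_c)`; applied to
`(a, b) = (x, r_c)` it gives `k₂ < 0` and `Φ⁻(k₂) = Φ⁻(x) - Φ⁻(r_c)`.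
-/

open Real

lemma two_rpow_lt_one {y : ℝ} (hy : y < 0) : (2:ℝ) ^ y < 1 :=
  rpow_lt_one_of_one_lt_of_neg one_lt_two hy

lemma neg_of_two_rpow_lt_one {y : ℝ} (h : (2:ℝ) ^ y < 1) : y < 0 :=
  (rpow_lt_rpow_left_iff one_lt_two).1 (by rwa [rpow_zero])

lemma two_rpow_Phim {y : ℝ} (hy : y < 0) : (2:ℝ) ^ Phim y = 1 - 2 ^ y :=
  rpow_logb two_pos (by norm_num) (sub_pos.2 (two_rpow_lt_one hy))

section Cotransform

variable {a b : ℝ}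

lemma two_rpow_cotransform (hba : b < a) (ha : a < 0) :
    (2:ℝ) ^ (a + Phim (b - a) - Phim b) = (2 ^ a - 2 ^ b) / (1 - 2 ^ b) := by
  rw [rpow_sub two_pos, rpow_add two_pos, two_rpow_Phim (sub_neg.2 hba),
    two_rpow_Phim (hba.trans ha),
    mul_sub, mul_one, ← rpow_add two_pos, add_sub_cancel]

lemma one_sub_two_rpow_cotransform (hba : b < a) (ha : a < 0) :
    1 - (2:ℝ) ^ (a + Phim (b - a) - Phim b) = (1 - 2 ^ a) / (1 - 2 ^ b) := by
  have hv : (2:ℝ) ^ b < 1 := two_rpow_lt_one (hba.trans ha)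
  rw [two_rpow_cotransform hba ha]
  field_simp [(sub_pos.2 hv).ne']
  ring

lemma cotransform_neg (hba : b < a) (ha : a < 0) : a + Phim (b - a) - Phim b < 0 := by
  have hv : (2:ℝ) ^ b < 1 := two_rpow_lt_one (hba.trans ha)
  have hvu : (2:ℝ) ^ b < 2 ^ a := (rpow_lt_rpow_left_iff one_lt_two).2 hba
  refine neg_of_two_rpow_lt_one ?_
  rw [two_rpow_cotransform hba ha, div_lt_one (sub_pos.2 hv)]
  linarith [two_rpow_lt_one ha]

lemma Phim_cotransform (hba : b < a) (ha : a < 0) :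
    Phim (a + Phim (b - a) - Phim b) = Phim a - Phim b := by
  have hu : (2:ℝ) ^ a < 1 := two_rpow_lt_one ha
  have hv : (2:ℝ) ^ b < 1 := two_rpow_lt_one (hba.trans ha)
  rw [Phim, one_sub_two_rpow_cotransform hba ha, logb_div (sub_pos.2 hu).ne' (sub_pos.2 hv).ne',
    Phim, Phim]

end Cotransform

theorem stmt_18 (x rc rb : ℝ) (hrc : rc < x) (hx : x < 0) (hrb : rb < rc - x) :
    rc - x + Phim (rb - (rc - x)) - Phim rb < 0 ∧
    x + Phim rb + Phim (rc - x + Phim (rb - (rc - x)) - Phim rb) - Phim rc < 0 ∧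
    Phim x = Phim rc +
      Phim (x + Phim rb + Phim (rc - x + Phim (rb - (rc - x)) - Phim rb) - Phim rc) := by
  have hrcx : rc - x < 0 := by linarith
  have hk₂ : x + Phim rb + Phim (rc - x + Phim (rb - (rc - x)) - Phim rb) - Phim rc
      = x + Phim (rc - x) - Phim rc := by
    rw [Phim_cotransform hrb hrcx]
    ring
  rw [hk₂, Phim_cotransform hrc hx]
  exact ⟨cotransform_neg hrb hrcx, cotransform_neg hrc hx, by ring⟩
end
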